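/- arXiv:math/9811008 — 6 statements merged into one kernel-verified Lean document; each statement's English description precedes it below -/
import Mathlib

section
/- Let M be a geodesic metric space, let γ be a geodesic ray in M, and let s ≥ 0. Then the horoball HB_s(γ) equals the closure in M of the union ⋃_{t > s} {p ∈ M : d(p, γ(t)) ≤ t − s} of the closed balls of radius t − s centered at γ(t) for t > s. -/
open Metric Filter Set

/-- A geodesic ray in a metric space: an isometric embedding of `[0,∞)`,
modelled as a map `ℝ → M` that is isometric on nonnegative reals. -/
def IsGeodesicRay {M : Type*} [MetricSpace M] (γ : ℝ → M) : Prop :=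
  ∀ s t : ℝ, 0 ≤ s → 0 ≤ t → dist (γ s) (γ t) = |s - t|

/-- The Busemann function of a geodesic ray:
`β_γ(b) = sup_{t ≥ 0} (t − d(b, γ(t)))`. -/
noncomputable def busemann {M : Type*} [MetricSpace M] (γ : ℝ → M) (b : M) : ℝ :=
  sSup {x : ℝ | ∃ t : ℝ, 0 ≤ t ∧ x = t - dist b (γ t)}

/-- The (closed) horoball of `γ` at level `s`: `{p | β_γ(p) ≥ s}`. -/
def horoball {M : Type*} [MetricSpace M] (γ : ℝ → M) (s : ℝ) : Set M :=
  {p : M | s ≤ busemann γ p}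

/-- `M` is a geodesic metric space: any two points are joined by a geodesic segment. -/
def IsGeodesicSpace (M : Type*) [MetricSpace M] : Prop :=
  ∀ a b : M, ∃ σ : ℝ → M, σ 0 = a ∧ σ (dist a b) = b ∧
    ∀ s t : ℝ, s ∈ Set.Icc 0 (dist a b) → t ∈ Set.Icc 0 (dist a b) →
      dist (σ s) (σ t) = |s - t|

/-- The CN (Bruhat–Tits) inequality; a geodesic space satisfying it is CAT(0). -/
def CNInequality (M : Type*) [MetricSpace M] : Prop :=
  ∀ x y z m : M, dist y m = dist y z / 2 → dist m z = dist y z / 2 →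
    dist x m ^ 2 ≤ dist x y ^ 2 / 2 + dist x z ^ 2 / 2 - dist y z ^ 2 / 4

/-- Two geodesic rays are asymptotic if they stay at bounded distance. -/
def AsymptoticRays {M : Type*} [MetricSpace M] (γ γ' : ℝ → M) : Prop :=
  ∃ r : ℝ, ∀ t : ℝ, 0 ≤ t → dist (γ t) (γ' t) ≤ r

lemma busemann_set_nonempty {M : Type*} [MetricSpace M] (γ : ℝ → M) (p : M) :
    {x : ℝ | ∃ t : ℝ, 0 ≤ t ∧ x = t - dist p (γ t)}.Nonempty :=
  ⟨0 - dist p (γ 0), 0, le_refl 0, rfl⟩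

lemma busemann_set_bdd {M : Type*} [MetricSpace M] {γ : ℝ → M} (hγ : IsGeodesicRay γ) (p : M) :
    BddAbove {x : ℝ | ∃ t : ℝ, 0 ≤ t ∧ x = t - dist p (γ t)} := by
  refine ⟨dist (γ 0) p, ?_⟩
  rintro x ⟨t, ht, rfl⟩
  have h := hγ 0 t le_rfl ht
  have h2 : dist (γ 0) (γ t) = t := by rw [h, abs_of_nonpos (by linarith)]; ring
  have h3 := dist_triangle (γ 0) p (γ t)
  linarith [h3, h2.symm.le]

lemma le_busemann {M : Type*} [MetricSpace M] {γ : ℝ → M} (hγ : IsGeodesicRay γ) (p : M)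
    {t : ℝ} (ht : 0 ≤ t) : t - dist p (γ t) ≤ busemann γ p :=
  le_csSup (busemann_set_bdd hγ p) ⟨t, ht, rfl⟩

lemma busemann_le_add {M : Type*} [MetricSpace M] {γ : ℝ → M} (hγ : IsGeodesicRay γ)
    (p q : M) : busemann γ p ≤ busemann γ q + dist p q := by
  apply csSup_le (busemann_set_nonempty γ p)
  rintro x ⟨t, ht, rfl⟩
  have h1 : t - dist q (γ t) ≤ busemann γ q := le_busemann hγ q ht
  have h2 := dist_triangle q p (γ t)
  rw [dist_comm q p] at h2
  linarith

lemma busemann_continuous {M : Type*} [MetricSpace M] {γ : ℝ → M} (hγ : IsGeodesicRay γ) :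
    Continuous (busemann γ) := by
  refine (LipschitzWith.of_dist_le_mul (K := 1) fun p q => ?_).continuous
  have h1 := busemann_le_add hγ p q
  have h2 := busemann_le_add hγ q p
  rw [dist_comm q p] at h2
  rw [Real.dist_eq, NNReal.coe_one, one_mul]
  rw [abs_sub_le_iff]
  constructor <;> linarith

/-- for `s ≥ 0`, the horoball `HB_s(γ)` is the closure of the
union of the closed balls `B_{t−s}(γ(t))` for `t > s`. -/
theorem horoball_eq_closure_iUnion_balls {M : Type*} [MetricSpace M]
    (hgeo : IsGeodesicSpace M) (γ : ℝ → M) (hγ : IsGeodesicRay γ)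
    (s : ℝ) (hs : 0 ≤ s) :
    horoball γ s = closure (⋃ t ∈ Set.Ioi s, {p : M | dist p (γ t) ≤ t - s}) := by
  apply Set.Subset.antisymm
  · -- horoball ⊆ closure
    intro p hp
    rw [Metric.mem_closure_iff]
    intro ε hε
    have hlt : s - ε < busemann γ p := by
      have : s ≤ busemann γ p := hp
      linarith
    obtain ⟨x, ⟨t, ht, rfl⟩, hx⟩ := exists_lt_of_lt_csSup (busemann_set_nonempty γ p) hlt
    set t' : ℝ := max t (s + 1) with ht'def
    have hts : s < t' := lt_of_lt_of_le (by linarith) (le_max_right _ _)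
    have ht'0 : 0 ≤ t' := le_trans hs hts.le
    have htt' : t ≤ t' := le_max_left _ _
    set d' : ℝ := dist p (γ t') with hd'def
    have hd'nn : 0 ≤ d' := dist_nonneg
    have hγtt' : dist (γ t) (γ t') = t' - t := by
      rw [hγ t t' ht ht'0, abs_of_nonpos (by linarith)]; ring
    have hd'lt : d' < t' - s + ε := by
      have h3 := dist_triangle p (γ t) (γ t')
      rw [hγtt'] at h3
      linarith
    obtain ⟨σ, hσ0, hσd, hσiso⟩ := hgeo (γ t') p
    rw [dist_comm (γ t') p] at hσd hσiso
    set u : ℝ := min d' (t' - s) with hudef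
    have hu0 : 0 ≤ u := le_min hd'nn (by linarith)
    have hud : u ≤ d' := min_le_left _ _
    refine ⟨σ u, ?_, ?_⟩
    · refine Set.mem_biUnion hts ?_
      have : dist (σ u) (γ t') = u := by
        rw [← hσ0, hσiso u 0 ⟨hu0, hud⟩ ⟨le_refl 0, hd'nn⟩, sub_zero, abs_of_nonneg hu0]
      rw [Set.mem_setOf_eq, this]
      exact min_le_right _ _
    · have : dist p (σ u) = d' - u := by
        rw [← hσd, hσiso d' u ⟨hd'nn, le_refl d'⟩ ⟨hu0, hud⟩, abs_of_nonneg (by linarith)]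
      rw [this]
      rcases min_cases d' (t' - s) with ⟨h1, _⟩ | ⟨h1, _⟩ <;> rw [hudef, h1] <;> linarith
  · -- closure ⊆ horoball
    apply closure_minimal
    · rintro q hq
      simp only [Set.mem_iUnion, Set.mem_setOf_eq] at hq
      obtain ⟨t, hts, hqt⟩ := hq
      have ht0 : 0 ≤ t := le_trans hs (le_of_lt hts)
      have := le_busemann hγ q ht0
      show s ≤ busemann γ q
      linarith
    · exact IsClosed.preimage (busemann_continuous hγ) isClosed_Ici
end

section
/- Let M be a proper geodesic metric space satisfying the CN inequality (i.e., a proper CAT(0) space). If γ and γ' are asymptotic geodesic rays in M, then the difference of their Busemann functions is constant: for all a, b ∈ M, β_γ(a) − β_{γ'}(a) = β_γ(b) − β_{γ'}(b). -/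
open Metric Filter Set

section helpers
variable {M : Type*} [MetricSpace M]

private lemma bus_nonempty (γ : ℝ → M) (b : M) :
    {x : ℝ | ∃ t : ℝ, 0 ≤ t ∧ x = t - dist b (γ t)}.Nonempty :=
  ⟨0 - dist b (γ 0), 0, le_rfl, rfl⟩

private lemma ray_dist {γ : ℝ → M} (hγ : IsGeodesicRay γ) {s t : ℝ}
    (hs : 0 ≤ s) (hst : s ≤ t) : dist (γ s) (γ t) = t - s := by
  rw [hγ s t hs (hs.trans hst), abs_of_nonpos (by linarith)]; ring

private lemma bus_bdd {γ : ℝ → M} (hγ : IsGeodesicRay γ) (b : M) :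
    dist (γ 0) b ∈ upperBounds {x : ℝ | ∃ t : ℝ, 0 ≤ t ∧ x = t - dist b (γ t)} := by
  rintro x ⟨t, ht, rfl⟩
  have h2 : dist (γ 0) (γ t) = t - 0 := ray_dist hγ le_rfl ht
  have h3 := dist_triangle (γ 0) b (γ t)
  linarith

private lemma le_bus {γ : ℝ → M} (hγ : IsGeodesicRay γ) (b : M) {t : ℝ} (ht : 0 ≤ t) :
    t - dist b (γ t) ≤ busemann γ b :=
  le_csSup ⟨_, bus_bdd hγ b⟩ ⟨t, ht, rfl⟩

private lemma bus_le {γ : ℝ → M} (b : M) {c : ℝ}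
    (h : ∀ t : ℝ, 0 ≤ t → t - dist b (γ t) ≤ c) : busemann γ b ≤ c := by
  apply csSup_le (bus_nonempty γ b)
  rintro x ⟨t, ht, rfl⟩; exact h t ht

private lemma bus_le_dist {γ : ℝ → M} (hγ : IsGeodesicRay γ) (b : M) :
    busemann γ b ≤ dist (γ 0) b :=
  csSup_le (bus_nonempty γ b) (bus_bdd hγ b)

private lemma bus_lip {γ : ℝ → M} (hγ : IsGeodesicRay γ) (a b : M) :
    busemann γ b ≤ busemann γ a + dist a b := by
  apply bus_le
  intro t ht
  have h1 : t - dist a (γ t) ≤ busemann γ a := le_bus hγ a ht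
  have h2 := dist_triangle a b (γ t)
  linarith [dist_comm a b]

private lemma bus_self {γ : ℝ → M} (hγ : IsGeodesicRay γ) {s : ℝ} (hs : 0 ≤ s) :
    busemann γ (γ s) = s := by
  apply le_antisymm
  · apply bus_le
    intro t ht
    have h := hγ s t hs ht
    have h2 : t - s ≤ |s - t| := by rw [abs_sub_comm]; exact le_abs_self _
    linarith
  · have h := le_bus hγ (γ s) hs
    simpa using h

private lemma bus_approx {γ : ℝ → M} (hγ : IsGeodesicRay γ) (b : M) {ε : ℝ} (hε : 0 < ε) :
    ∃ t₀ : ℝ, 0 ≤ t₀ ∧ ∀ t, t₀ ≤ t → busemann γ b - ε < t - dist b (γ t) := by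
  obtain ⟨x, hx, hlt⟩ := exists_lt_of_lt_csSup (bus_nonempty γ b)
      (show busemann γ b - ε < busemann γ b by linarith)
  obtain ⟨t₁, ht₁, rfl⟩ := hx
  refine ⟨t₁, ht₁, fun t ht => ?_⟩
  have h2 : dist (γ t₁) (γ t) = t - t₁ := ray_dist hγ ht₁ ht
  have h3 := dist_triangle b (γ t₁) (γ t)
  linarith

private lemma sqrt_trick {X P Q : ℝ} (hX : 0 ≤ X) (hP : 0 < P) (hQ : 0 ≤ Q)
    (h : X ^ 2 ≤ P ^ 2 + Q) : X ≤ P + Q / (2 * P) := by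
  have h2P : (0:ℝ) < 2 * P := by linarith
  have hw : 2 * P * (Q / (2 * P)) = Q := by field_simp
  have hwnn : 0 ≤ Q / (2 * P) := div_nonneg hQ h2P.le
  nlinarith [sq_nonneg (Q / (2 * P)), sq_nonneg (X - P)]

private lemma sq_le_rev {X E : ℝ} (hX : 0 ≤ X) (hE : 0 ≤ E) (h : X ^ 2 ≤ E ^ 2) : X ≤ E := by
  nlinarith

private lemma sq_le_sq'' {X E : ℝ} (hX : 0 ≤ X) (hE : X ≤ E) : X ^ 2 ≤ E ^ 2 := by nlinarith

private lemma fact1 (hCN : CNInequality M) (τ : ℝ → M) {L : ℝ} (hL : 0 < L)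
    (hiso : ∀ u v : ℝ, u ∈ Icc 0 L → v ∈ Icc 0 L → dist (τ u) (τ v) = |u - v|)
    (x : M) {u : ℝ} (hu : u ∈ Icc (0:ℝ) L) :
    dist x (τ u) ^ 2 ≤ (1 - u / L) * dist x (τ 0) ^ 2 + (u / L) * dist x (τ L) ^ 2
      - u * (L - u) := by
  set H : ℝ → ℝ := fun v => dist x (τ v) ^ 2 - v ^ 2 -
      ((1 - v / L) * dist x (τ 0) ^ 2 + (v / L) * (dist x (τ L) ^ 2 - L ^ 2)) with hHdef
  have h0 : (0:ℝ) ∈ Icc (0:ℝ) L := ⟨le_rfl, hL.le⟩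
  have hLmem : L ∈ Icc (0:ℝ) L := ⟨hL.le, le_rfl⟩
  have H0 : H 0 = 0 := by simp [hHdef]
  have HL : H L = 0 := by
    have hd : L / L = 1 := div_self hL.ne'
    simp only [hHdef, hd]
    ring
  have Hmid : ∀ a b : ℝ, a ∈ Icc (0:ℝ) L → b ∈ Icc (0:ℝ) L →
      H ((a + b) / 2) ≤ (H a + H b) / 2 := by
    intro a b ha hb
    have hm : (a + b) / 2 ∈ Icc (0:ℝ) L := ⟨by linarith [ha.1, hb.1], by linarith [ha.2, hb.2]⟩
    have dyz : dist (τ a) (τ b) = |a - b| := hiso a b ha hb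
    have habs : |a - (a + b) / 2| = |a - b| / 2 := by
      rw [show a - (a + b) / 2 = (a - b) / 2 by ring, abs_div, abs_two]
    have habs2 : |(a + b) / 2 - b| = |a - b| / 2 := by
      rw [show (a + b) / 2 - b = (a - b) / 2 by ring, abs_div, abs_two]
    have d1 : dist (τ a) (τ ((a + b) / 2)) = dist (τ a) (τ b) / 2 := by
      rw [hiso a _ ha hm, dyz, habs]
    have d2 : dist (τ ((a + b) / 2)) (τ b) = dist (τ a) (τ b) / 2 := by
      rw [hiso _ b hm hb, dyz, habs2]
    have cn := hCN x (τ a) (τ b) (τ ((a + b) / 2)) d1 d2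
    rw [dyz, sq_abs] at cn
    have key : H ((a + b) / 2) - (H a + H b) / 2 =
        dist x (τ ((a + b) / 2)) ^ 2 -
          (dist x (τ a) ^ 2 / 2 + dist x (τ b) ^ 2 / 2) + (a - b) ^ 2 / 4 := by
      simp only [hHdef]; ring
    linarith
  have Hcont : ContinuousOn H (Icc (0:ℝ) L) := by
    have c1 : ContinuousOn (fun v => dist x (τ v)) (Icc (0:ℝ) L) := by
      apply LipschitzOnWith.continuousOn (K := 1)
      rw [lipschitzOnWith_iff_dist_le_mul]
      intro a ha b hb
      rw [Real.dist_eq, Real.dist_eq]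
      have h := abs_dist_sub_le (τ a) (τ b) x
      rw [dist_comm (τ a) x, dist_comm (τ b) x, hiso a b ha hb] at h
      simpa using h
    rw [hHdef]
    apply ContinuousOn.sub
    apply ContinuousOn.sub
    · exact c1.pow 2
    · exact (continuous_pow 2).continuousOn
    · apply Continuous.continuousOn
      continuity
  clear_value H
  obtain ⟨u₀, hu₀m, hmax⟩ := isCompact_Icc.exists_isMaxOn (nonempty_Icc.mpr hL.le) Hcont
  have hmax' := isMaxOn_iff.mp hmax
  have hu0 : H u₀ ≤ 0 := by
    rcases le_or_gt u₀ (L - u₀) with hc | hc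
    · have h2 : 2 * u₀ ∈ Icc (0:ℝ) L := ⟨by linarith [hu₀m.1], by linarith⟩
      have hmid := Hmid 0 (2 * u₀) h0 h2
      rw [show (0 + 2 * u₀) / 2 = u₀ by ring, H0] at hmid
      have h3 := hmax' _ h2
      linarith
    · have h2 : 2 * u₀ - L ∈ Icc (0:ℝ) L := ⟨by linarith, by linarith [hu₀m.2]⟩
      have hmid := Hmid (2 * u₀ - L) L h2 hLmem
      rw [show (2 * u₀ - L + L) / 2 = u₀ by ring, HL] at hmid
      have h3 := hmax' _ h2
      linarith
  have hu' : H u ≤ 0 := le_trans (hmax' _ hu) hu0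
  simp only [hHdef] at hu'
  have hid : u / L * L ^ 2 = u * L := by field_simp
  have expand : u / L * (dist x (τ L) ^ 2 - L ^ 2) = u / L * dist x (τ L) ^ 2 - u * L := by
    rw [mul_sub, hid]
  have e2 : u * (L - u) = u * L - u ^ 2 := by ring
  linarith

end helpers


section main
variable {M : Type*} [MetricSpace M]

private lemma bus_ray_const {γ γ' : ℝ → M} (hCN : CNInequality M)
    (hγ : IsGeodesicRay γ) (hγ' : IsGeodesicRay γ') {r : ℝ}
    (hr : ∀ t : ℝ, 0 ≤ t → dist (γ t) (γ' t) ≤ r) {s : ℝ} (hs : 0 ≤ s) :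
    busemann γ (γ' s) = s + busemann γ (γ' 0) := by
  set C : ℝ := busemann γ (γ' 0) with hC
  clear_value C
  have hd0 : dist (γ' 0) (γ' s) = s := by
    have := ray_dist hγ' le_rfl hs; linarith
  apply le_antisymm
  · have h := bus_lip hγ (γ' 0) (γ' s)
    rw [hd0, ← hC] at h
    linarith
  · -- hard half
    have hCr : C ≤ r := by
      rw [hC]; exact le_trans (bus_le_dist hγ (γ' 0)) (hr 0 le_rfl)
    apply le_of_forall_pos_le_add
    intro ε hε
    set ε' : ℝ := ε / 4 with hε'def
    have hε' : 0 < ε' := by positivity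
    clear_value ε'
    obtain ⟨t₀, ht₀0, ht₀⟩ := bus_approx hγ (γ' 0) hε'
    rw [← hC] at ht₀
    set Q : ℝ := 2 * s * (r - C + ε') + 2 * s * ε' + ε' with hQ
    have hQpos : 0 < Q := by
      have h1 : 0 ≤ s * (r - C + ε') := mul_nonneg hs (by linarith)
      have h2 : 0 ≤ s * ε' := mul_nonneg hs hε'.le
      rw [hQ]; linarith
    clear_value Q
    set t : ℝ := max t₀ (s + C + Q / ε' + 1) with ht_def
    have ht0 : 0 ≤ t := le_trans ht₀0 (le_max_left _ _)
    have htt₀ : t₀ ≤ t := le_max_left _ _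
    have htP : s + C + Q / ε' + 1 ≤ t := le_max_right _ _
    clear_value t
    set P : ℝ := t - C + ε' - s with hP
    have hQε' : 0 ≤ Q / ε' := le_of_lt (by positivity)
    have hPQ : Q / ε' + 1 ≤ P := by rw [hP]; linarith
    have hPpos : 0 < P := lt_of_lt_of_le (by linarith) hPQ
    clear_value P
    -- lower bound on busemann γ' (γ t)
    have hGt : t - r ≤ busemann γ' (γ t) := by
      have h1 := bus_lip hγ' (γ t) (γ' t)
      rw [bus_self hγ' ht0] at h1
      have h2 := hr t ht0
      linarith
    obtain ⟨S₀, hS₀0, hS₀⟩ := bus_approx hγ' (γ t) hε'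
    set S : ℝ := max S₀ (max s (s * (busemann γ' (γ t) - ε') ^ 2 / ε' + 1)) with hS_def
    have hSs : s ≤ S := le_trans (le_max_left _ _) (le_max_right _ _)
    have hS1 : s * (busemann γ' (γ t) - ε') ^ 2 / ε' + 1 ≤ S :=
      le_trans (le_max_right _ _) (le_max_right _ _)
    have hDS := hS₀ S (le_max_left _ _)
    clear_value S
    have hSpos : 0 < S := lt_of_lt_of_le (by positivity) hS1
    have hisoγ' : ∀ u v : ℝ, u ∈ Icc (0:ℝ) S → v ∈ Icc (0:ℝ) S →
        dist (γ' u) (γ' v) = |u - v| := fun u v hu hv => hγ' u v hu.1 hv.1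
    have h₁ := fact1 hCN γ' hSpos hisoγ' (γ t) ⟨hs, hSs⟩
    rw [dist_comm (γ t) (γ' s), dist_comm (γ t) (γ' 0)] at h₁
    have hfin := le_bus hγ (γ' s) ht0
    have hht := ht₀ t htt₀
    set G : ℝ := busemann γ' (γ t) with hG
    set A : ℝ := dist (γ' 0) (γ t) with hA
    set X : ℝ := dist (γ' s) (γ t) with hX
    set E0 : ℝ := dist (γ t) (γ' S) with hE0
    have hXnn : (0:ℝ) ≤ X := dist_nonneg
    have hAnn : (0:ℝ) ≤ A := dist_nonneg
    have hEnn : (0:ℝ) ≤ E0 := dist_nonneg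
    clear_value G A X E0
    have hE : E0 < S - (G - ε') := by linarith
    have h₂ : (s / S) * E0 ^ 2 ≤ (s / S) * (S - (G - ε')) ^ 2 :=
      mul_le_mul_of_nonneg_left (sq_le_sq'' hEnn hE.le) (div_nonneg hs hSpos.le)
    have e1 : (s / S) * (S - (G - ε')) ^ 2 - s * (S - s) =
        -(2 * s * (G - ε')) + s * (G - ε') ^ 2 / S + s ^ 2 := by
      field_simp
      ring
    have hdiv : s * (G - ε') ^ 2 / S ≤ ε' := by
      rw [div_le_iff₀ hSpos]
      have h4 : s * (G - ε') ^ 2 ≤ (S - 1) * ε' :=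
        (div_le_iff₀ hε').mp (by linarith)
      linarith
    have hsS : (0:ℝ) ≤ (s / S) * A ^ 2 := by positivity
    have h₃ : X ^ 2 ≤ A ^ 2 - 2 * s * G + s ^ 2 + 2 * s * ε' + ε' := by
      linarith [h₁, h₂, e1, hdiv, hsS]
    have hA_ub : A < t - C + ε' := by linarith
    have htCe : 0 < t - C + ε' := by linarith
    have hA2 : A ^ 2 ≤ (t - C + ε') ^ 2 := sq_le_sq'' hAnn hA_ub.le
    have hGs : -(2 * s * G) ≤ -(2 * s * (t - r)) := by
      have := mul_le_mul_of_nonneg_left hGt hs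
      linarith
    have hkey : (t - C + ε') ^ 2 - 2 * s * (t - r) + s ^ 2 + 2 * s * ε' + ε'
        = P ^ 2 + Q := by rw [hP, hQ]; ring
    have hX2 : X ^ 2 ≤ P ^ 2 + Q := by linarith [h₃, hA2, hGs, hkey]
    have hXP : X ≤ P + Q / (2 * P) := sqrt_trick hXnn hPpos hQpos.le hX2
    have hQ2P : Q / (2 * P) ≤ ε' / 2 := by
      rw [div_le_div_iff₀ (by linarith) (by norm_num)]
      have h5 : Q ≤ (P - 1) * ε' := (div_le_iff₀ hε').mp (by linarith)
      have h6 : 0 ≤ P * ε' := mul_nonneg hPpos.le hε'.le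
      linarith
    have hTP : t - P = s + C - ε' := by rw [hP]; ring
    have hstep : s + C - ε' - ε' / 2 ≤ busemann γ (γ' s) := by linarith
    rw [hε'def] at hstep
    linarith

end main

private lemma crux_ineq {M : Type*} [MetricSpace M] {γ γ' : ℝ → M}
    (hgeo : IsGeodesicSpace M) (hCN : CNInequality M)
    (hγ : IsGeodesicRay γ) (hγ' : IsGeodesicRay γ') {r : ℝ}
    (hr : ∀ t : ℝ, 0 ≤ t → dist (γ t) (γ' t) ≤ r) :
    0 ≤ busemann γ (γ' 0) + busemann γ' (γ 0) := by
  have key : -busemann γ (γ' 0) ≤ busemann γ' (γ 0) := by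
    set C : ℝ := busemann γ (γ' 0) with hC
    set c0 : ℝ := dist (γ 0) (γ' 0) with hc0
    have hc0nn : 0 ≤ c0 := dist_nonneg
    have hCc0 : C ≤ c0 := by rw [hC, hc0]; exact bus_le_dist hγ (γ' 0)
    have hCc0' : -c0 ≤ C := by
      have h := le_bus hγ (γ' 0) (le_refl (0:ℝ))
      rw [hC, hc0, dist_comm (γ 0) (γ' 0)]
      simpa using h
    clear_value C c0
    set K : ℝ := c0 ^ 2 - C ^ 2 with hK
    have hKnn : 0 ≤ K := by rw [hK]; nlinarith
    clear_value K
    apply le_of_forall_pos_le_add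
    intro ε hε
    -- choose s
    set s : ℝ := max 0 (max (1 - C) (3 * (K + 1) / (2 * ε) - C)) with hs_def
    have hs0 : 0 ≤ s := le_max_left _ _
    have hs1 : 1 - C ≤ s := le_trans (le_max_left _ _) (le_max_right _ _)
    have hs2 : 3 * (K + 1) / (2 * ε) - C ≤ s := le_trans (le_max_right _ _) (le_max_right _ _)
    clear_value s
    have hsC : 0 < s + C := by linarith
    have hfrac : (K + 1) / (2 * (s + C)) ≤ ε / 3 := by
      rw [div_le_div_iff₀ (by linarith) (by norm_num)]
      have h1 : 3 * (K + 1) / (2 * ε) ≤ s + C := by linarith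
      have h2 : 3 * (K + 1) ≤ (s + C) * (2 * ε) := by
        rw [div_le_iff₀ (by linarith : (0:ℝ) < 2 * ε)] at h1
        linarith
      linarith
    have hconst : busemann γ (γ' s) = s + C := by
      rw [hC]; exact bus_ray_const hCN hγ hγ' hr hs0
    -- choose ε₁
    set ε₁ : ℝ := min 1 ((ε / 3) ^ 2 / (2 * s + 1)) with hε₁def
    have hε₁ : 0 < ε₁ := by
      apply lt_min one_pos
      positivity
    have hε₁1 : ε₁ ≤ 1 := min_le_left _ _
    have hε₁2 : ε₁ ≤ (ε / 3) ^ 2 / (2 * s + 1) := min_le_right _ _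
    clear_value ε₁
    have h2se : 2 * s * ε₁ + ε₁ ^ 2 ≤ (ε / 3) ^ 2 := by
      have h1 : ε₁ ^ 2 ≤ ε₁ := by nlinarith
      have h2 : (2 * s + 1) * ε₁ ≤ (ε / 3) ^ 2 := by
        have := (le_div_iff₀ (show (0:ℝ) < 2 * s + 1 by linarith)).mp hε₁2
        linarith
      linarith
    obtain ⟨t₁, ht₁0, ht₁⟩ := bus_approx hγ (γ' s) hε₁
    -- choose t
    set t : ℝ := max t₁ (max (s + c0 + 1) (s * C ^ 2 + c0 + 1)) with ht_def
    have htt₁ : t₁ ≤ t := le_max_left _ _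
    have ht_1 : s + c0 + 1 ≤ t := le_trans (le_max_left _ _) (le_max_right _ _)
    have ht_2 : s * C ^ 2 + c0 + 1 ≤ t := le_trans (le_max_right _ _) (le_max_right _ _)
    clear_value t
    have hsC2 : 0 ≤ s * C ^ 2 := by positivity
    have ht0 : 0 ≤ t := by linarith
    -- the geodesic from γ' 0 to γ t
    obtain ⟨τ, hτ0, hτL, hτiso⟩ := hgeo (γ' 0) (γ t)
    have hdt : dist (γ 0) (γ t) = t := by
      have := ray_dist hγ le_rfl ht0; linarith
    have hLlb : t - c0 ≤ dist (γ' 0) (γ t) := by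
      have h1 := dist_triangle (γ 0) (γ' 0) (γ t)
      rw [hdt] at h1
      rw [hc0] at *
      linarith
    have hLC : t - dist (γ' 0) (γ t) ≤ C := by
      have := le_bus hγ (γ' 0) ht0
      rw [hC]; exact this
    have hds0 : dist (γ' s) (γ' 0) = s := by
      have := ray_dist hγ' le_rfl hs0
      rw [dist_comm] at this; linarith
    have hDub : dist (γ' s) (γ t) < t - s - C + ε₁ := by
      have h := ht₁ t htt₁
      rw [hconst] at h
      linarith
    -- abstract the length
    set L : ℝ := dist (γ' 0) (γ t) with hL
    have hLnn : 0 ≤ L := dist_nonneg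
    have hsL : s + 1 ≤ L := by linarith
    have hLpos : 0 < L := by linarith
    have hsmem : s ∈ Icc (0:ℝ) L := ⟨hs0, by linarith⟩
    -- two applications of fact1 with apexes γ' s and γ 0
    have f1a := fact1 hCN τ hLpos hτiso (γ' s) hsmem
    rw [hτ0, hτL, hds0] at f1a
    have f1b := fact1 hCN τ hLpos hτiso (γ 0) hsmem
    rw [hτ0, hτL, hdt, ← hc0] at f1b
    -- abstract remaining distances
    have htri := dist_triangle (γ 0) (τ s) (γ' s)
    have hbusfin := le_bus hγ' (γ 0) hs0
    set D : ℝ := dist (γ' s) (γ t) with hD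
    set Y : ℝ := dist (γ' s) (τ s) with hY
    set Z : ℝ := dist (γ 0) (τ s) with hZ
    set W : ℝ := dist (γ 0) (γ' s) with hW
    have hDnn : 0 ≤ D := dist_nonneg
    have hYnn : 0 ≤ Y := dist_nonneg
    have hZnn : 0 ≤ Z := dist_nonneg
    have hWnn : 0 ≤ W := dist_nonneg
    have hYW : dist (τ s) (γ' s) = Y := dist_comm (γ' s) (τ s) ▸ rfl
    rw [hYW] at htri
    clear_value D Y Z W L
    -- step 1 : Y is small
    have hDub2 : D ≤ (L - s) + ε₁ := by linarith
    have hDsq : (s / L) * D ^ 2 ≤ (s / L) * ((L - s) + ε₁) ^ 2 := by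
      apply mul_le_mul_of_nonneg_left _ (div_nonneg hs0 hLpos.le)
      apply sq_le_sq'' hDnn hDub2
    have e1 : (1 - s / L) * s ^ 2 + (s / L) * ((L - s) + ε₁) ^ 2 - s * (L - s) =
        (2 * s * ε₁ * (L - s) + s * ε₁ ^ 2) / L := by
      field_simp
      ring
    have e1b : (2 * s * ε₁ * (L - s) + s * ε₁ ^ 2) / L ≤ 2 * s * ε₁ + ε₁ ^ 2 := by
      rw [div_le_iff₀ hLpos]
      have h1 : 0 ≤ 2 * s * ε₁ * s := by positivity
      have h2 : s * ε₁ ^ 2 ≤ L * ε₁ ^ 2 := by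
        apply mul_le_mul_of_nonneg_right (by linarith) (by positivity)
      linarith [h1, h2]
    have hY2 : Y ^ 2 ≤ (ε / 3) ^ 2 := by linarith
    have hYe : Y ≤ ε / 3 := sq_le_rev hYnn (by positivity) hY2
    -- step 2 : Z is controlled
    have htLC : t ≤ L + C := by linarith
    have ht2 : t ^ 2 ≤ (L + C) ^ 2 := sq_le_sq'' ht0 htLC
    have hsLdiv : (s / L) * t ^ 2 ≤ (s / L) * (L + C) ^ 2 := by
      apply mul_le_mul_of_nonneg_left ht2 (div_nonneg hs0 hLpos.le)
    have e2 : (s / L) * (L + C) ^ 2 - s * (L - s) = 2 * s * C + s ^ 2 + s * C ^ 2 / L := by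
      field_simp
      ring
    have hsCL : s * C ^ 2 / L ≤ 1 := by
      rw [div_le_one hLpos]
      linarith
    have hc0drop : 0 ≤ (s / L) * c0 ^ 2 := by positivity
    have hZ2 : Z ^ 2 ≤ (s + C) ^ 2 + (K + 1) := by
      have : Z ^ 2 ≤ c0 ^ 2 + 2 * s * C + s ^ 2 + 1 := by linarith
      have hKe : c0 ^ 2 = K + C ^ 2 := by rw [hK]; ring
      linarith [this, hKe]
    have hZe : Z ≤ (s + C) + (K + 1) / (2 * (s + C)) :=
      sqrt_trick hZnn hsC (by linarith) hZ2
    -- combine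
    have hWb : W ≤ (s + C) + ε / 3 + ε / 3 := by linarith
    have : s - W ≤ busemann γ' (γ 0) := hbusfin
    linarith
  linarith

/-- in a proper CAT(0) space, Busemann functions of asymptotic
geodesic rays differ by a constant. -/
theorem busemann_sub_const_of_asymptotic {M : Type*} [MetricSpace M] [ProperSpace M]
    (hgeo : IsGeodesicSpace M) (hCN : CNInequality M)
    (γ γ' : ℝ → M) (hγ : IsGeodesicRay γ) (hγ' : IsGeodesicRay γ')
    (hasym : AsymptoticRays γ γ') (a b : M) :
    busemann γ a - busemann γ' a = busemann γ b - busemann γ' b := by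
  obtain ⟨r, hr⟩ := hasym
  have hr' : ∀ t : ℝ, 0 ≤ t → dist (γ' t) (γ t) ≤ r := fun t ht => by
    rw [dist_comm]; exact hr t ht
  have hcrux := crux_ineq hgeo hCN hγ hγ' hr
  have ineq1 : ∀ x : M, busemann γ' x + busemann γ (γ' 0) ≤ busemann γ x := by
    intro x
    have h : busemann γ' x ≤ busemann γ x - busemann γ (γ' 0) := by
      apply bus_le
      intro u hu
      have h1 := bus_lip hγ x (γ' u)
      rw [bus_ray_const hCN hγ hγ' hr hu] at h1
      linarith
    linarith
  have ineq2 : ∀ x : M, busemann γ x + busemann γ' (γ 0) ≤ busemann γ' x := by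
    intro x
    have h : busemann γ x ≤ busemann γ' x - busemann γ' (γ 0) := by
      apply bus_le
      intro u hu
      have h1 := bus_lip hγ' x (γ u)
      rw [bus_ray_const hCN hγ' hγ hr' hu] at h1
      linarith
    linarith
  have key : ∀ x : M, busemann γ x - busemann γ' x = busemann γ (γ' 0) := by
    intro x
    have h1 := ineq1 x
    have h2 := ineq2 x
    linarith
  rw [key a, key b]
end

section
/- Let M be a proper geodesic metric space satisfying the CN inequality (i.e., a proper CAT(0) space), let γ be a geodesic ray in M, and let g, h : M → M be surjective isometries such that g ∘ γ and h ∘ γ are each asymptotic to γ. Define χ(g) := β_γ(g(γ(0))) and χ(h) := β_γ(h(γ(0))). Then (g ∘ h) ∘ γ is asymptotic to γ and χ(g ∘ h) = χ(g) + χ(h); that is, g ↦ χ(g) is an additive homomorphism from the group of surjective isometries fixing the end of γ to ℝ. -/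
open Metric Filter Set

/-!
Let `β` be the Busemann function of `γ` and `a` an isometry with `a ∘ γ` asymptotic to `γ`.
The CN inequality makes `β` midpoint concave, so along the ray `a ∘ γ`, where `β(a γ t) - t` is
bounded below, `β` grows at least at unit speed; comparing `a b` with `a (γ t)` gives
`β(a b) ≥ β(b) + β(a γ(0))`. Applied to `a⁻¹` this gives the reverse inequality up to the
term `β(a γ(0)) + β(a⁻¹ γ(0))`, which is `≤ 0` by superadditivity and `≥ 0` by the quadrilateral
inequality of CAT(0) spaces in the quadrilateral `γ 0, γ u, a (γ u), a (γ 0)` as `u → ∞`.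
Hence `β ∘ a - β` is the constant `β(a γ(0))`, which is additive in `a`.
-/

open Topology

theorem le_of_midpointConcave_of_bddBelow {f : ℝ → ℝ} {C : ℝ}
    (hmid : ∀ t, 0 ≤ t → f 0 + f (2 * t) ≤ 2 * f t) (hC : ∀ t, 0 ≤ t → C ≤ f t)
    {t : ℝ} (ht : 0 ≤ t) : f 0 ≤ f t := by
  by_contra! hlt
  have hdouble : ∀ n : ℕ, f (2 ^ n * t) ≤ f 0 - 2 ^ n * (f 0 - f t) := by
    intro n
    induction n with
    | zero => simp
    | succ n ih =>
      have := hmid (2 ^ n * t) (by positivity)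
      rw [pow_succ, mul_comm _ (2 : ℝ), mul_assoc]
      linarith
  obtain ⟨n, hn⟩ := pow_unbounded_of_one_lt ((f 0 - C) / (f 0 - f t)) one_lt_two
  rw [div_lt_iff₀ (sub_pos.2 hlt)] at hn
  linarith [hdouble n, hC (2 ^ n * t) (by positivity)]

theorem add_le_of_sq_add_sq_le {p q u r : ℝ} (hp : 0 ≤ p) (hq : 0 ≤ q) (hu : 0 < u)
    (h : p ^ 2 + q ^ 2 ≤ 2 * u ^ 2 + 2 * r ^ 2) : p + q ≤ 2 * u + r ^ 2 / u := by
  have hsq : (2 * u + r ^ 2 / u) ^ 2 = 4 * u ^ 2 + 4 * r ^ 2 + (r ^ 2 / u) ^ 2 := by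
    field_simp; ring
  refine (pow_le_pow_iff_left₀ (by positivity) (by positivity) two_ne_zero).1 ?_
  nlinarith [sq_nonneg (p - q), sq_nonneg (r ^ 2 / u)]

section

variable {M : Type*} [MetricSpace M]

theorem IsGeodesicSpace.exists_midpoint (hgeo : IsGeodesicSpace M) (a b : M) :
    ∃ m, dist a m = dist a b / 2 ∧ dist m b = dist a b / 2 := by
  obtain ⟨σ, hσ0, hσ1, hσ⟩ := hgeo a b
  set d := dist a b
  have hd : 0 ≤ d := dist_nonneg
  have hmid : d / 2 ∈ Icc 0 d := ⟨by linarith, by linarith⟩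
  refine ⟨σ (d / 2), ?_, ?_⟩
  · rw [← hσ0, hσ 0 _ ⟨le_rfl, hd⟩ hmid, zero_sub, abs_neg, abs_of_nonneg hmid.1]
  · rw [← hσ1, hσ _ _ hmid ⟨hd, le_rfl⟩, abs_of_nonpos (by linarith)]
    ring

namespace CNInequality

variable (hCN : CNInequality M)
include hCN

theorem two_mul_dist_le {x y z m : M} (hym : dist y m = dist y z / 2)
    (hmz : dist m z = dist y z / 2) : 2 * dist x m ≤ dist x y + dist x z := by
  have hsq := hCN x y z m hym hmz
  have hyz := abs_dist_sub_le y z x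
  rw [dist_comm y x, dist_comm z x, abs_le] at hyz
  nlinarith [dist_nonneg (x := x) (y := m), dist_nonneg (x := x) (y := y),
    dist_nonneg (x := x) (y := z)]

theorem dist_sq_add_dist_sq_le (hgeo : IsGeodesicSpace M) (A B A' B' : M) :
    dist A B' ^ 2 + dist A' B ^ 2 ≤
      dist A A' ^ 2 + dist A B ^ 2 + dist A' B' ^ 2 + dist B B' ^ 2 := by
  obtain ⟨m, hAm, hmB'⟩ := hgeo.exists_midpoint A B'
  have hA' := hCN A' A B' m hAm hmB'
  have hB := hCN B A B' m hAm hmB'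
  have htri := dist_triangle A' m B
  rw [dist_comm A' A] at hA'
  rw [dist_comm B A, dist_comm B m] at hB
  nlinarith [sq_nonneg (dist A' m - dist m B), dist_nonneg (x := A') (y := B)]

end CNInequality

namespace IsGeodesicRay

variable {γ : ℝ → M} (hγ : IsGeodesicRay γ)
include hγ

theorem dist_of_le {s t : ℝ} (hs : 0 ≤ s) (hst : s ≤ t) : dist (γ s) (γ t) = t - s := by
  rw [hγ s t hs (hs.trans hst), abs_of_nonpos (sub_nonpos.2 hst), neg_sub]

theorem isometry_comp {a : M → M} (ha : Isometry a) : IsGeodesicRay (a ∘ γ) :=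
  fun s t hs ht => (ha.dist_eq _ _).trans (hγ s t hs ht)

theorem bddAbove_sub_dist (b : M) :
    BddAbove {x : ℝ | ∃ t : ℝ, 0 ≤ t ∧ x = t - dist b (γ t)} := by
  refine ⟨dist (γ 0) b, ?_⟩
  rintro _ ⟨t, ht, rfl⟩
  have := dist_triangle (γ 0) b (γ t)
  rw [hγ.dist_of_le le_rfl ht] at this
  linarith

theorem sub_dist_le_busemann (b : M) {t : ℝ} (ht : 0 ≤ t) : t - dist b (γ t) ≤ busemann γ b :=
  le_csSup (hγ.bddAbove_sub_dist b) ⟨t, ht, rfl⟩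

theorem monotoneOn_sub_dist (b : M) : MonotoneOn (fun t => t - dist b (γ t)) (Ici 0) := by
  intro s hs t _ hst
  have := dist_triangle b (γ s) (γ t)
  rw [hγ.dist_of_le hs hst] at this
  dsimp only
  linarith

theorem tendsto_busemann (b : M) :
    Tendsto (fun t => t - dist b (γ t)) atTop (𝓝 (busemann γ b)) := by
  rw [tendsto_order]
  refine ⟨fun x hx => ?_, fun x hx => ?_⟩
  · obtain ⟨_, ⟨s, hs, rfl⟩, hxs⟩ := exists_lt_of_lt_csSup (by exact ⟨_, 0, le_rfl, rfl⟩) hx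
    filter_upwards [eventually_ge_atTop s] with t hst
    exact hxs.trans_le (hγ.monotoneOn_sub_dist b hs (mem_Ici.2 (hs.trans hst)) hst)
  · filter_upwards [eventually_ge_atTop 0] with t ht
    exact (hγ.sub_dist_le_busemann b ht).trans_lt hx

theorem busemann_apply {s : ℝ} (hs : 0 ≤ s) : busemann γ (γ s) = s := by
  refine tendsto_nhds_unique (hγ.tendsto_busemann (γ s)) (tendsto_const_nhds.congr' ?_)
  filter_upwards [eventually_ge_atTop s] with t hst
  rw [hγ.dist_of_le hs hst]
  ring

theorem busemann_sub_dist_le (x y : M) : busemann γ y - dist x y ≤ busemann γ x :=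
  le_of_tendsto_of_tendsto' ((hγ.tendsto_busemann y).sub_const _) (hγ.tendsto_busemann x)
    fun t => by linarith [dist_triangle x y (γ t)]

end IsGeodesicRay

namespace AsymptoticRays

variable {σ τ ρ : ℝ → M}

theorem symm (h : AsymptoticRays σ τ) : AsymptoticRays τ σ := by
  obtain ⟨r, hr⟩ := h
  exact ⟨r, fun t ht => dist_comm (τ t) (σ t) ▸ hr t ht⟩

theorem trans (h₁ : AsymptoticRays σ τ) (h₂ : AsymptoticRays τ ρ) : AsymptoticRays σ ρ := by
  obtain ⟨r₁, hr₁⟩ := h₁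
  obtain ⟨r₂, hr₂⟩ := h₂
  exact ⟨r₁ + r₂, fun t ht => (dist_triangle _ _ _).trans (add_le_add (hr₁ t ht) (hr₂ t ht))⟩

theorem isometry_comp {a : M → M} (ha : Isometry a) (h : AsymptoticRays σ τ) :
    AsymptoticRays (a ∘ σ) (a ∘ τ) := by
  obtain ⟨r, hr⟩ := h
  exact ⟨r, fun t ht => (ha.dist_eq _ _).trans_le (hr t ht)⟩

end AsymptoticRays

variable {γ : ℝ → M}

theorem CNInequality.busemann_add_le (hCN : CNInequality M) (hγ : IsGeodesicRay γ) {y z m : M}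
    (hym : dist y m = dist y z / 2) (hmz : dist m z = dist y z / 2) :
    busemann γ y + busemann γ z ≤ 2 * busemann γ m :=
  le_of_tendsto_of_tendsto' ((hγ.tendsto_busemann y).add (hγ.tendsto_busemann z))
    ((hγ.tendsto_busemann m).const_mul 2) fun t => by
      linarith [hCN.two_mul_dist_le (x := γ t) hym hmz, dist_comm (γ t) m, dist_comm (γ t) y,
        dist_comm (γ t) z]

theorem CNInequality.busemann_add_le_busemann_of_asymptotic (hCN : CNInequality M)
    (hγ : IsGeodesicRay γ) {σ : ℝ → M} (hσ : IsGeodesicRay σ) (hσγ : AsymptoticRays σ γ)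
    {t : ℝ} (ht : 0 ≤ t) : busemann γ (σ 0) + t ≤ busemann γ (σ t) := by
  obtain ⟨r, hr⟩ := hσγ
  have hmono := le_of_midpointConcave_of_bddBelow (f := fun s => busemann γ (σ s) - s) (C := -r)
    (fun s hs => ?_) (fun s hs => ?_) ht
  · simp only [sub_zero] at hmono
    linarith
  · have h2s : 0 ≤ 2 * s := by linarith
    have hconc := hCN.busemann_add_le hγ (y := σ 0) (z := σ (2 * s)) (m := σ s)
      (by rw [hσ.dist_of_le le_rfl hs, hσ.dist_of_le le_rfl h2s]; ring)
      (by rw [hσ.dist_of_le hs (by linarith), hσ.dist_of_le le_rfl h2s]; ring)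
    linarith
  · linarith [hγ.sub_dist_le_busemann (σ s) hs, hr s hs]

theorem busemann_add_busemann_le_busemann_apply (hCN : CNInequality M) (hγ : IsGeodesicRay γ)
    {a : M → M} (ha : Isometry a) (haγ : AsymptoticRays (a ∘ γ) γ) (b : M) :
    busemann γ b + busemann γ (a (γ 0)) ≤ busemann γ (a b) := by
  refine le_of_tendsto ((hγ.tendsto_busemann b).add_const _) ?_
  filter_upwards [eventually_ge_atTop 0] with t ht
  have hray := hCN.busemann_add_le_busemann_of_asymptotic hγ (hγ.isometry_comp ha) haγ ht
  have hlip := hγ.busemann_sub_dist_le (a b) (a (γ t))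
  rw [ha.dist_eq] at hlip
  simp only [Function.comp_apply] at hray
  linarith

theorem zero_le_busemann_add_busemann_symm (hgeo : IsGeodesicSpace M) (hCN : CNInequality M)
    (hγ : IsGeodesicRay γ) (e : M ≃ᵢ M) (he : AsymptoticRays (e ∘ γ) γ) :
    0 ≤ busemann γ (e (γ 0)) + busemann γ (e.symm (γ 0)) := by
  obtain ⟨r, hr⟩ := he
  have hbound : ∀ u, 0 < u → -(r ^ 2 / u) ≤ busemann γ (e (γ 0)) + busemann γ (e.symm (γ 0)) := by
    intro u hu
    have hp := hγ.sub_dist_le_busemann (e.symm (γ 0)) hu.le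
    rw [← e.dist_eq, e.apply_symm_apply] at hp
    have hq := hγ.sub_dist_le_busemann (e (γ 0)) hu.le
    have hquad := hCN.dist_sq_add_dist_sq_le hgeo (γ 0) (γ u) (e (γ 0)) (e (γ u))
    have hside₀ := pow_le_pow_left₀ dist_nonneg (hr 0 le_rfl) 2
    have hsideᵤ := pow_le_pow_left₀ dist_nonneg (hr u hu.le) 2
    simp only [Function.comp_apply] at hside₀ hsideᵤ
    rw [e.dist_eq, hγ.dist_of_le le_rfl hu.le, sub_zero, dist_comm (γ 0) (e (γ 0)),
      dist_comm (γ u) (e (γ u))] at hquad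
    have hdiag := add_le_of_sq_add_sq_le (p := dist (γ 0) (e (γ u))) (q := dist (e (γ 0)) (γ u))
      (r := r) dist_nonneg dist_nonneg hu (by linarith)
    linarith
  have hlim : Tendsto (fun u : ℝ => -(r ^ 2 / u)) atTop (𝓝 0) := by
    simpa using ((tendsto_const_nhds (x := r ^ 2)).div_atTop (tendsto_id (α := ℝ))).neg
  exact le_of_tendsto hlim ((eventually_gt_atTop (0 : ℝ)).mono hbound)

theorem busemann_isometryEquiv_apply (hgeo : IsGeodesicSpace M) (hCN : CNInequality M)
    (hγ : IsGeodesicRay γ) (e : M ≃ᵢ M) (he : AsymptoticRays (e ∘ γ) γ) (b : M) :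
    busemann γ (e b) = busemann γ b + busemann γ (e (γ 0)) := by
  have he' : AsymptoticRays (e.symm ∘ γ) γ := by
    simpa [Function.comp_def] using (he.isometry_comp e.symm.isometry).symm
  have hsuper := busemann_add_busemann_le_busemann_apply hCN hγ e.isometry he b
  have hsuper' := busemann_add_busemann_le_busemann_apply hCN hγ e.symm.isometry he' (e b)
  have hinv := busemann_add_busemann_le_busemann_apply hCN hγ e.isometry he (e.symm (γ 0))
  have hinv' := zero_le_busemann_add_busemann_symm hgeo hCN hγ e he
  rw [e.symm_apply_apply] at hsuper'
  rw [e.apply_symm_apply, hγ.busemann_apply le_rfl] at hinv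
  linarith

end

theorem busemann_character_additive_general {M : Type*} [MetricSpace M]
    (hgeo : IsGeodesicSpace M) (hCN : CNInequality M)
    (γ : ℝ → M) (hγ : IsGeodesicRay γ)
    (g h : M → M) (hgs : Function.Surjective g) (hgi : Isometry g)
    (hga : AsymptoticRays (g ∘ γ) γ) (hha : AsymptoticRays (h ∘ γ) γ) :
    AsymptoticRays ((g ∘ h) ∘ γ) γ ∧
    busemann γ ((g ∘ h) (γ 0)) = busemann γ (g (γ 0)) + busemann γ (h (γ 0)) := by
  refine ⟨(hha.isometry_comp hgi).trans hga, ?_⟩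
  let e : M ≃ᵢ M := ⟨Equiv.ofBijective g ⟨hgi.injective, hgs⟩, hgi⟩
  rw [Function.comp_apply, add_comm]
  exact busemann_isometryEquiv_apply hgeo hCN hγ e hga (h (γ 0))

/-- `g ↦ χ(g) := β_γ(g(γ(0)))` is additive on surjective
isometries fixing the end of `γ`. -/
theorem busemann_character_additive {M : Type*} [MetricSpace M] [ProperSpace M]
    (hgeo : IsGeodesicSpace M) (hCN : CNInequality M)
    (γ : ℝ → M) (hγ : IsGeodesicRay γ)
    (g h : M → M) (hgs : Function.Surjective g) (hgi : Isometry g)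
    (hhs : Function.Surjective h) (hhi : Isometry h)
    (hga : AsymptoticRays (g ∘ γ) γ) (hha : AsymptoticRays (h ∘ γ) γ) :
    AsymptoticRays ((g ∘ h) ∘ γ) γ ∧
    busemann γ ((g ∘ h) (γ 0)) = busemann γ (g (γ 0)) + busemann γ (h (γ 0)) :=
  busemann_character_additive_general hgeo hCN γ hγ g h hgs hgi hga hha
end

section
/- Let M be a geodesic metric space satisfying the CN inequality (i.e., a CAT(0) space), let ε, r be positive numbers, and let R > r(1 + 2r/ε). If γ : [0,∞) → M is a geodesic ray starting at c ∈ M, then for every p ∈ M with d(c, p) ≤ r one has |β_γ(p) − R + d(p, γ(R))| ≤ ε; in other words, the monotone limit defining β_γ(p) is approximated within ε by its value at time R. -/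
open Metric Filter Set

/-- the monotone limit defining `β_γ(p)` is approximated within
`ε` by its value at time `R > r(1 + 2r/ε)`, for `p` in the `r`-ball around
the start of the ray. -/
theorem busemann_approx_at_time_R {M : Type*} [MetricSpace M]
    (hgeo : IsGeodesicSpace M) (hCN : CNInequality M)
    (ε r : ℝ) (hε : 0 < ε) (hr : 0 < r)
    (R : ℝ) (hR : r * (1 + 2 * r / ε) < R)
    (γ : ℝ → M) (hγ : IsGeodesicRay γ) (c : M) (hc : γ 0 = c)
    (p : M) (hp : dist c p ≤ r) :
    |busemann γ p - R + dist p (γ R)| ≤ ε := by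
  have hR0 : 0 < R := lt_trans (by positivity) hR
  have ha0 : 0 ≤ dist p c := dist_nonneg
  have har : dist p c ≤ r := by rw [dist_comm]; exact hp
  have hd0 : dist p (γ 0) = dist p c := by rw [hc]
  have hub : ∀ t : ℝ, 0 ≤ t → t - dist p (γ t) ≤ dist p c := by
    intro t ht
    have h1 : dist (γ 0) (γ t) = t := by
      rw [hγ 0 t le_rfl ht, abs_of_nonpos (by linarith)]; ring
    have := dist_triangle (γ 0) p (γ t)
    rw [dist_comm (γ 0) p, hd0] at this
    linarith
  have hlb : ∀ t : ℝ, 0 ≤ t → -dist p c ≤ t - dist p (γ t) := by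
    intro t ht
    have h1 : dist (γ 0) (γ t) = t := by
      rw [hγ 0 t le_rfl ht, abs_of_nonpos (by linarith)]; ring
    have := dist_triangle p (γ 0) (γ t)
    rw [hd0] at this
    linarith
  have hmono : ∀ s t : ℝ, 0 ≤ s → s ≤ t → s - dist p (γ s) ≤ t - dist p (γ t) := by
    intro s t hs hst
    have h1 : dist (γ s) (γ t) = t - s := by
      rw [hγ s t hs (le_trans hs hst), abs_of_nonpos (by linarith)]; ring
    have := dist_triangle p (γ s) (γ t)
    linarith
  have hkey : ∀ n : ℕ, dist p (γ R) ^ 2 - R ^ 2 ≤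
      (1 - ((2:ℝ) ^ n)⁻¹) * dist p c ^ 2
        + ((2:ℝ) ^ n)⁻¹ * (dist p (γ (2 ^ n * R)) ^ 2 - (2 ^ n * R) ^ 2) := by
    intro n
    induction n with
    | zero => simp
    | succ n ih =>
      have h2n : (0:ℝ) < 2 ^ n := by positivity
      have hps : (2:ℝ) ^ (n + 1) = 2 ^ n * 2 := pow_succ 2 n
      have hpos1 : (0:ℝ) < 2 ^ n * R := by positivity
      have hpos2 : (0:ℝ) < 2 ^ (n + 1) * R := by positivity
      have hle2 : (2:ℝ) ^ n * R ≤ 2 ^ (n + 1) * R := by rw [hps]; nlinarith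
      have hmid : dist p (γ (2 ^ n * R)) ^ 2 - (2 ^ n * R) ^ 2 ≤
          dist p c ^ 2 / 2
            + (dist p (γ (2 ^ (n + 1) * R)) ^ 2 - (2 ^ (n + 1) * R) ^ 2) / 2 := by
        have hy : dist (γ 0) (γ (2 ^ n * R)) = dist (γ 0) (γ (2 ^ (n + 1) * R)) / 2 := by
          rw [hγ 0 _ le_rfl hpos1.le, hγ 0 _ le_rfl hpos2.le,
            abs_of_nonpos (by linarith), abs_of_nonpos (by linarith), hps]
          ring
        have hz : dist (γ (2 ^ n * R)) (γ (2 ^ (n + 1) * R))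
            = dist (γ 0) (γ (2 ^ (n + 1) * R)) / 2 := by
          rw [hγ _ _ hpos1.le hpos2.le, hγ 0 _ le_rfl hpos2.le,
            abs_of_nonpos (by linarith), abs_of_nonpos (by linarith), hps]
          ring
        have hcn := hCN p (γ 0) (γ (2 ^ (n + 1) * R)) (γ (2 ^ n * R)) hy hz
        rw [hd0, hγ 0 _ le_rfl hpos2.le, abs_of_nonpos (by linarith)] at hcn
        rw [hps] at hcn ⊢
        nlinarith [hcn]
      have h2n1 : ((2:ℝ) ^ (n + 1))⁻¹ = ((2:ℝ) ^ n)⁻¹ / 2 := by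
        rw [hps, mul_inv]; ring
      have hinv : (0:ℝ) < ((2:ℝ) ^ n)⁻¹ := by positivity
      have hm := mul_le_mul_of_nonneg_left hmid hinv.le
      rw [h2n1]
      nlinarith [hm, ih]
  have haR : dist p c ^ 2 ≤ ε * R := by
    have h := mul_lt_mul_of_pos_right hR hε
    have heq : r * (1 + 2 * r / ε) * ε = r * ε + 2 * r ^ 2 := by
      field_simp
    rw [heq] at h
    nlinarith [mul_self_le_mul_self ha0 har, sq_nonneg r]
  have hdyadic : ∀ n : ℕ, 2 ^ n * R - dist p (γ (2 ^ n * R)) ≤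
      R - dist p (γ R) + ε := by
    intro n
    have h2n : (0:ℝ) < 2 ^ n := by positivity
    have ht0 : (0:ℝ) ≤ 2 ^ n * R := by positivity
    have hkn := hkey n
    have hlamt : ((2:ℝ) ^ n)⁻¹ * (2 ^ n * R) = R := by
      rw [← mul_assoc, inv_mul_cancel₀ h2n.ne']; ring
    have hinv : (0:ℝ) < ((2:ℝ) ^ n)⁻¹ := by positivity
    have hbt : (2 ^ n * R - dist p (γ (2 ^ n * R))) ^ 2 ≤ dist p c ^ 2 :=
      sq_le_sq' (hlb _ ht0) (hub _ ht0)
    have h3 : ((2:ℝ) ^ n)⁻¹ * (2 ^ n * R) * (2 ^ n * R - dist p (γ (2 ^ n * R)))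
        = R * (2 ^ n * R - dist p (γ (2 ^ n * R))) := by rw [hlamt]
    have h4 := mul_le_mul_of_nonneg_left hbt hinv.le
    have h2R : 2 * R * ((2 ^ n * R - dist p (γ (2 ^ n * R))) - (R - dist p (γ R)))
        ≤ 2 * dist p c ^ 2 := by
      linarith [hkn, h3, h4, sq_nonneg (R - dist p (γ R)), sq_nonneg (dist p c)]
    nlinarith [h2R, haR, mul_pos hR0 hε]
  have hSne : {x : ℝ | ∃ t : ℝ, 0 ≤ t ∧ x = t - dist p (γ t)}.Nonempty :=
    ⟨0 - dist p (γ 0), 0, le_rfl, rfl⟩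
  have hRS : R - dist p (γ R) ∈ {x : ℝ | ∃ t : ℝ, 0 ≤ t ∧ x = t - dist p (γ t)} :=
    ⟨R, hR0.le, rfl⟩
  have hSub : ∀ x ∈ {x : ℝ | ∃ t : ℝ, 0 ≤ t ∧ x = t - dist p (γ t)},
      x ≤ R - dist p (γ R) + ε := by
    rintro x ⟨t, ht, rfl⟩
    obtain ⟨n, hn⟩ := pow_unbounded_of_one_lt (t / R) (one_lt_two (α := ℝ))
    have htn : t ≤ 2 ^ n * R := by
      rw [div_lt_iff₀ hR0] at hn
      linarith
    exact le_trans (hmono t (2 ^ n * R) ht htn) (hdyadic n)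
  have hbdd : BddAbove {x : ℝ | ∃ t : ℝ, 0 ≤ t ∧ x = t - dist p (γ t)} :=
    ⟨R - dist p (γ R) + ε, hSub⟩
  have hge : R - dist p (γ R) ≤ busemann γ p := le_csSup hbdd hRS
  have hle : busemann γ p ≤ R - dist p (γ R) + ε := csSup_le hSne hSub
  rw [abs_le]
  exact ⟨by linarith, by linarith⟩
end

section
/- (Theorem 12.2) Let M be a proper geodesic metric space satisfying the CN inequality (i.e., a proper CAT(0) space), let a group G act on M by isometries, let F ⊆ M be a finite nonempty subset, and let A := {g·x : g ∈ G, x ∈ F} be the union of the G-orbits of the points of F. Then the following are equivalent: (i) for every geodesic ray γ in M and every s ∈ ℝ, the horoball HB_s(γ) contains a point of A; (ii) the action is cocompact, i.e., there is a compact subset C ⊆ M with ⋃_{g ∈ G} g·C = M. -/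
open Metric Filter Set Pointwise

/-- Theorem 12.2: for a finite nonempty `F ⊆ M` with orbit union
`A`, every horoball meets `A` if and only if the `G`-action is cocompact. -/
theorem horoballs_meet_orbit_iff_cocompact {M : Type*} [MetricSpace M] [ProperSpace M]
    (hgeo : IsGeodesicSpace M) (hCN : CNInequality M)
    {G : Type*} [Group G] [MulAction G M]
    (hiso : ∀ (g : G) (p q : M), dist (g • p) (g • q) = dist p q)
    (F : Set M) (hFfin : F.Finite) (hFne : F.Nonempty) :
    (∀ γ : ℝ → M, IsGeodesicRay γ → ∀ s : ℝ,
        ∃ p : M, (∃ g : G, ∃ x ∈ F, p = g • x) ∧ p ∈ horoball γ s) ↔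
    (∃ C : Set M, IsCompact C ∧ (⋃ g : G, g • C) = Set.univ) := by

  classical
  obtain ⟨x₀, hx₀⟩ := hFne
  set A : Set M := {personal | ∃ g : G, ∃ x ∈ F, personal = g • x} with hAdef
  have hAne : A.Nonempty := ⟨x₀, 1, x₀, hx₀, (one_smul G x₀).symm⟩
  have hAinv : ∀ (g : G) (c : M), c ∈ A → g • c ∈ A := by
    rintro g c ⟨h, x, hx, rfl⟩
    exact ⟨g * h, x, hx, (mul_smul g h x).symm⟩
  -- the Busemann function is at least each term of the sup
  have hbus : ∀ (γ : ℝ → M), IsGeodesicRay γ → ∀ (p : M) (t : ℝ), 0 ≤ t →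
      t - dist p (γ t) ≤ busemann γ p := by
    intro γ hγ p t ht
    apply le_csSup
    · refine ⟨dist p (γ 0), ?_⟩
      rintro y ⟨u, hu, rfl⟩
      have h1 : dist (γ u) (γ 0) = u := by
        rw [hγ u 0 hu le_rfl, sub_zero, abs_of_nonneg hu]
      have h2 := dist_triangle (γ u) p (γ 0)
      have h3 := dist_comm (γ u) p
      linarith
    · exact ⟨t, ht, rfl⟩
  constructor
  · -- horoballs meet the orbit ⇒ cocompact
    intro hH
    by_contra hcc
    -- the orbit set A is not quasi-dense
    have hfar : ∀ n : ℕ, ∃ b : M, ∀ c ∈ A, (n : ℝ) < dist b c := by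
      intro n
      by_contra hno
      push_neg at hno
      apply hcc
      refine ⟨⋃ x ∈ F, closedBall x n, hFfin.isCompact_biUnion
        (fun x _ => isCompact_closedBall x n), ?_⟩
      ext p
      simp only [Set.mem_iUnion, Set.mem_univ, iff_true]
      obtain ⟨c, ⟨g, x, hx, rfl⟩, hle⟩ := hno p
      refine ⟨g, ?_⟩
      rw [Set.mem_smul_set]
      refine ⟨g⁻¹ • p, Set.mem_biUnion hx ?_, smul_inv_smul g p⟩
      rw [Metric.mem_closedBall]
      calc dist (g⁻¹ • p) x = dist (g • g⁻¹ • p) (g • x) := (hiso g _ _).symm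
        _ = dist p (g • x) := by rw [smul_inv_smul]
        _ ≤ n := hle
    choose b hb using hfar
    set r : ℕ → ℝ := fun n => infDist (b n) A with hrdef
    have hrn : ∀ n : ℕ, (n : ℝ) ≤ r n := by
      intro n
      by_contra hlt
      push_neg at hlt
      obtain ⟨c, hc, hcd⟩ := (Metric.infDist_lt_iff hAne).1 hlt
      exact absurd hcd (not_lt.2 (hb n c hc).le)
    have hrd : ∀ (n : ℕ), ∀ c ∈ A, r n ≤ dist (b n) c :=
      fun n c hc => Metric.infDist_le_dist_of_mem hc
    have hnear : ∀ n : ℕ, ∃ c ∈ A, dist (b n) c < r n + 1 := by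
      intro n
      exact (Metric.infDist_lt_iff hAne).1 (by linarith [hrdef ▸ le_refl (r n)])
    choose a haA hab using hnear
    have hgx : ∀ n : ℕ, ∃ g : G, ∃ x ∈ F, a n = g • x := fun n => haA n
    choose g x hxF hax using hgx
    set b' : ℕ → M := fun n => (g n)⁻¹ • b n with hb'def
    have hLeq : ∀ n : ℕ, dist (x n) (b' n) = dist (b n) (a n) := by
      intro n
      calc dist (x n) (b' n) = dist (g n • x n) (g n • b' n) := (hiso _ _ _).symm
        _ = dist (a n) (b n) := by rw [hb'def]; simp only; rw [smul_inv_smul, ← hax n]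
        _ = dist (b n) (a n) := dist_comm _ _
    set L : ℕ → ℝ := fun n => dist (x n) (b' n) with hLdef
    have hL0 : ∀ n : ℕ, 0 ≤ L n := fun n => dist_nonneg
    have hLr : ∀ n : ℕ, r n ≤ L n := by
      intro n
      rw [hLdef]; simp only; rw [hLeq n]
      exact hrd n (a n) (haA n)
    have hLub : ∀ n : ℕ, L n < r n + 1 := by
      intro n
      rw [hLdef]; simp only; rw [hLeq n]
      exact hab n
    have hLn : ∀ n : ℕ, (n : ℝ) ≤ L n := fun n => (hrn n).trans (hLr n)
    have hb'A : ∀ (n : ℕ), ∀ c ∈ A, r n ≤ dist (b' n) c := by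
      intro n c hc
      have : dist (b' n) c = dist (b n) (g n • c) := by
        rw [← hiso (g n) (b' n) c, hb'def]; simp only; rw [smul_inv_smul]
      rw [this]
      exact hrd n _ (hAinv (g n) c hc)
    -- geodesics from x n to b' n
    choose σ hσ0 hσend hσiso using fun n => hgeo (x n) (b' n)
    -- key estimate: along σ n the distance to A is at least t - 1
    have key : ∀ (n : ℕ), ∀ t ∈ Set.Icc (0:ℝ) (L n), ∀ c ∈ A, t - 1 ≤ dist (σ n t) c := by
      intro n t ht c hc
      have h1 : dist (σ n t) (b' n) = L n - t := by
        have h := hσiso n t (L n) ht ⟨hL0 n, le_rfl⟩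
        rw [hσend n] at h
        rw [h, abs_of_nonpos (by linarith [ht.2]), neg_sub]
      have h2 := dist_triangle (b' n) (σ n t) c
      have h3 := hb'A n c hc
      have h4 := hLub n
      have h5 := dist_comm (b' n) (σ n t)
      linarith
    -- extended, everywhere-defined 1-Lipschitz-ish maps
    set τ : ℕ → ℝ → M := fun n t => σ n (min (max t 0) (L n)) with hτdef
    have hmem : ∀ (n : ℕ) (t : ℝ), min (max t 0) (L n) ∈ Set.Icc (0:ℝ) (L n) :=
      fun n t => ⟨le_min (le_max_right t 0) (hL0 n), min_le_right _ _⟩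
    have hτeq : ∀ (t : ℝ), 0 ≤ t → ∀ (n : ℕ), t ≤ L n → τ n t = σ n t := by
      intro t ht n htn
      rw [hτdef]; simp only
      rw [max_eq_left ht, min_eq_left htn]
    have hτball : ∀ (t : ℝ) (n : ℕ), τ n t ∈ ⋃ x ∈ F, closedBall x (max t 0) := by
      intro t n
      refine Set.mem_biUnion (hxF n) ?_
      rw [Metric.mem_closedBall]
      have h := hσiso n (min (max t 0) (L n)) 0 (hmem n t) ⟨le_rfl, hL0 n⟩
      rw [hσ0 n] at h
      rw [hτdef]; simp only
      rw [h, sub_zero, abs_of_nonneg (hmem n t).1]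
      exact min_le_left _ _
    -- ultrafilter limit
    set U : Ultrafilter ℕ := Ultrafilter.of atTop with hUdef
    have hU : (U : Filter ℕ) ≤ atTop := Ultrafilter.of_le _
    have hconv : ∀ t : ℝ, ∃ p : M, Filter.Tendsto (fun n => τ n t) (U : Filter ℕ) (nhds p) := by
      intro t
      have hK : IsCompact (⋃ x ∈ F, closedBall x (max t 0)) :=
        hFfin.isCompact_biUnion (fun x _ => isCompact_closedBall _ _)
      have hle : (U.map (fun n => τ n t) : Filter M) ≤
          Filter.principal (⋃ x ∈ F, closedBall x (max t 0)) := by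
        rw [Filter.le_principal_iff]
        exact Filter.mem_map.2 (Filter.univ_mem' (fun n => hτball t n))
      obtain ⟨p, -, hp⟩ := hK.ultrafilter_le_nhds (U.map _) hle
      exact ⟨p, hp⟩
    choose γ hγ using hconv
    -- γ is a geodesic ray
    have hray : IsGeodesicRay γ := by
      intro s t hs ht
      have h1 : Filter.Tendsto (fun n => dist (τ n s) (τ n t)) (U : Filter ℕ)
          (nhds (dist (γ s) (γ t))) := (hγ s).dist (hγ t)
      have h2 : (fun n => dist (τ n s) (τ n t)) =ᶠ[(U : Filter ℕ)] (fun _ => |s - t|) := by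
        refine Filter.Eventually.filter_mono hU ?_
        filter_upwards [Filter.eventually_ge_atTop ⌈max s t⌉₊] with n hn
        have hmn : max s t ≤ (n : ℝ) := Nat.ceil_le.1 hn
        have hsn : s ≤ L n := le_trans (le_trans (le_max_left s t) hmn) (hLn n)
        have htn : t ≤ L n := le_trans (le_trans (le_max_right s t) hmn) (hLn n)
        rw [hτeq s hs n hsn, hτeq t ht n htn]
        exact hσiso n s t ⟨hs, hsn⟩ ⟨ht, htn⟩
      exact tendsto_nhds_unique (h1.congr' h2) tendsto_const_nhds
    -- distance from γ t to A is at least t - 1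
    have hfarA : ∀ (t : ℝ), 0 ≤ t → ∀ c ∈ A, t - 1 ≤ dist (γ t) c := by
      intro t ht c hc
      have h1 : Filter.Tendsto (fun n => dist (τ n t) c) (U : Filter ℕ)
          (nhds (dist (γ t) c)) := (hγ t).dist tendsto_const_nhds
      have h2 : ∀ᶠ n in (U : Filter ℕ), t - 1 ≤ dist (τ n t) c := by
        refine Filter.Eventually.filter_mono hU ?_
        filter_upwards [Filter.eventually_ge_atTop ⌈t⌉₊] with n hn
        have htn : t ≤ L n := le_trans (Nat.ceil_le.1 hn) (hLn n)
        rw [hτeq t ht n htn]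
        exact key n t ⟨ht, htn⟩ c hc
      exact ge_of_tendsto h1 h2
    -- derive a contradiction from the horoball at level 2
    obtain ⟨p, hpA, hps⟩ := hH γ hray 2
    have hps' : (2:ℝ) ≤ busemann γ p := hps
    have hne : {y : ℝ | ∃ t : ℝ, 0 ≤ t ∧ y = t - dist p (γ t)}.Nonempty :=
      ⟨0 - dist p (γ 0), 0, le_rfl, rfl⟩
    obtain ⟨y, ⟨t, ht0, rfl⟩, hy⟩ :=
      exists_lt_of_lt_csSup hne (lt_of_lt_of_le one_lt_two hps')
    have hA' : p ∈ A := hpA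
    have h := hfarA t ht0 p hA'
    have h' := dist_comm p (γ t)
    linarith
  · -- cocompact ⇒ horoballs meet the orbit
    rintro ⟨C, hCc, hCcov⟩ γ hγ s
    obtain ⟨R, hR⟩ := hCc.isBounded.subset_closedBall x₀
    set t : ℝ := max (s + R) 0 with htdef
    have ht : 0 ≤ t := le_max_right _ _
    have hmem : γ t ∈ ⋃ g : G, g • C := by rw [hCcov]; exact Set.mem_univ _
    obtain ⟨g, hg⟩ := Set.mem_iUnion.1 hmem
    obtain ⟨c, hc, hgc⟩ := Set.mem_smul_set.1 hg
    refine ⟨g • x₀, ⟨g, x₀, hx₀, rfl⟩, ?_⟩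
    have hd : dist (g • x₀) (γ t) ≤ R := by
      rw [← hgc, hiso]
      have := hR hc
      rw [Metric.mem_closedBall] at this
      linarith [dist_comm x₀ c, this]
    have hbb := hbus γ hγ (g • x₀) t ht
    have hts : s + R ≤ t := le_max_left _ _
    show s ≤ busemann γ (g • x₀)
    have hdc := dist_comm (g • x₀) (γ t)
    linarith
end

section
/- Let M be a proper geodesic metric space, let A ⊆ M, let a ∈ A, and let D ≥ 0 and ε > 0. Suppose that for every m ∈ ℕ there exist points b_m ∈ M and a_m ∈ A with d(a, a_m) ≤ D, with inf_{c ∈ A} d(c, b_m) ≥ m, and with d(a_m, b_m) ≤ inf_{c ∈ A} d(c, b_m) + ε. Then there exists a geodesic ray γ with γ(0) = a such that β_γ(c) ≤ D + 2ε for every c ∈ A; in particular the horoball HB_s(γ) is disjoint from A for every s > D + 2ε. -/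
open Metric Filter Set Topology

/-- if there are points `b_m` whose distance to `A` tends to
infinity, nearly realized by points `a_m ∈ A` within distance `D` of `a`,
then some geodesic ray from `a` has small Busemann values on `A`; in
particular all sufficiently deep horoballs are disjoint from `A`. -/
theorem exists_ray_horoball_disjoint {M : Type*} [MetricSpace M] [ProperSpace M]
    (hgeo : IsGeodesicSpace M)
    (A : Set M) (a : M) (ha : a ∈ A)
    (D : ℝ) (hD : 0 ≤ D) (ε : ℝ) (hε : 0 < ε)
    (h : ∀ m : ℕ, ∃ bm am : M, am ∈ A ∧ dist a am ≤ D ∧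
        (m : ℝ) ≤ Metric.infDist bm A ∧ dist am bm ≤ Metric.infDist bm A + ε) :
    ∃ γ : ℝ → M, IsGeodesicRay γ ∧ γ 0 = a ∧
      (∀ c ∈ A, busemann γ c ≤ D + 2 * ε) ∧
      (∀ s : ℝ, D + 2 * ε < s → Disjoint (horoball γ s) A) := by
  choose b p hpA hpD hinf hdpb using h
  choose σ hσ0 hσT hσiso using fun m => hgeo a (b m)
  set T : ℕ → ℝ := fun m => dist a (b m) with hTdef
  have hT0 : ∀ m, 0 ≤ T m := fun m => dist_nonneg
  have hTm : ∀ m : ℕ, (m : ℝ) ≤ T m := fun m =>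
    (hinf m).trans (by simpa [hTdef, dist_comm] using Metric.infDist_le_dist_of_mem (x := b m) ha)
  have hTub : ∀ m, T m ≤ D + Metric.infDist (b m) A + ε := fun m => by
    calc T m ≤ dist a (p m) + dist (p m) (b m) := dist_triangle _ _ _
    _ ≤ D + (Metric.infDist (b m) A + ε) := add_le_add (hpD m) (hdpb m)
    _ = D + Metric.infDist (b m) A + ε := by ring
  set f : ℕ → ℝ → M := fun m t => σ m (max 0 (min t (T m))) with hfdef
  have hu_mem : ∀ m (t : ℝ), max 0 (min t (T m)) ∈ Set.Icc 0 (T m) := fun m t =>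
    ⟨le_max_left _ _, max_le (hT0 m) (min_le_right _ _)⟩
  have hf_mem : ∀ m (t : ℝ), f m t ∈ Metric.closedBall a (max 0 t) := by
    intro m t
    have h1 : dist (f m t) a = |max 0 (min t (T m)) - 0| := by
      have := hσiso m (max 0 (min t (T m))) 0 (hu_mem m t) ⟨le_refl _, hT0 m⟩
      rw [hfdef]; simp only [hσ0 m] at this ⊢; exact this
    rw [Metric.mem_closedBall, h1, sub_zero, abs_of_nonneg (le_max_left _ _)]
    exact max_le (le_max_left _ _) ((min_le_left _ _).trans (le_max_right _ _))
  set U : Ultrafilter ℕ := Ultrafilter.of atTop with hUdef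
  have hU : (U : Filter ℕ) ≤ atTop := Ultrafilter.of_le _
  have hγex : ∀ t : ℝ, ∃ x, Tendsto (fun m => f m t) U (𝓝 x) := by
    intro t
    obtain ⟨x, -, hx⟩ := (isCompact_closedBall a (max 0 t)).ultrafilter_le_nhds
      (U.map (fun m => f m t))
      (le_principal_iff.mpr (Filter.mem_map.mpr (Filter.univ_mem' fun m => hf_mem m t)))
    exact ⟨x, hx⟩
  choose γ hγ using hγex
  -- eventually, on [0, max s t], f m agrees with σ m
  have hev : ∀ s t : ℝ, 0 ≤ s → 0 ≤ t →
      ∀ᶠ m in (atTop : Filter ℕ), dist (f m s) (f m t) = |s - t| := by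
    intro s t hs ht
    filter_upwards [Filter.eventually_ge_atTop ⌈max s t⌉₊] with m hm
    have hmT : max s t ≤ T m := le_trans (le_trans (Nat.le_ceil _) (by exact_mod_cast hm)) (hTm m)
    have hsT : s ≤ T m := (le_max_left s t).trans hmT
    have htT : t ≤ T m := (le_max_right s t).trans hmT
    have e1 : max 0 (min s (T m)) = s := by rw [min_eq_left hsT, max_eq_right hs]
    have e2 : max 0 (min t (T m)) = t := by rw [min_eq_left htT, max_eq_right ht]
    have := hσiso m s t ⟨hs, hsT⟩ ⟨ht, htT⟩
    simpa [hfdef, e1, e2] using this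
  have hray : IsGeodesicRay γ := by
    intro s t hs ht
    have h1 : Tendsto (fun m => dist (f m s) (f m t)) U (𝓝 (dist (γ s) (γ t))) :=
      (hγ s).dist (hγ t)
    have h2 : Tendsto (fun m => dist (f m s) (f m t)) U (𝓝 |s - t|) :=
      tendsto_const_nhds.congr' (((hev s t hs ht).filter_mono hU).mono fun m hm => hm.symm)
    exact tendsto_nhds_unique h1 h2
  have hγ0 : γ 0 = a := by
    have hc : ∀ m, f m 0 = a := by
      intro m
      have : max 0 (min 0 (T m)) = 0 := by rw [min_eq_left (hT0 m), max_self]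
      rw [hfdef]; simp only [this]; exact hσ0 m
    have h1 : Tendsto (fun m => f m 0) U (𝓝 a) := by
      simp only [hc]; exact tendsto_const_nhds
    exact (tendsto_nhds_unique (hγ 0) h1)
  have hbuse : ∀ c ∈ A, busemann γ c ≤ D + 2 * ε := by
    intro c hc
    apply Real.sSup_le
    · rintro x ⟨t, ht, rfl⟩
      have key : t - dist c (γ t) ≤ D + ε := by
        have h1 : Tendsto (fun m => t - dist c (f m t)) U (𝓝 (t - dist c (γ t))) :=
          tendsto_const_nhds.sub (tendsto_const_nhds.dist (hγ t))
        refine le_of_tendsto h1 ?_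
        apply hU
        filter_upwards [Filter.eventually_ge_atTop ⌈t⌉₊] with m hm
        have htT : t ≤ T m := le_trans (le_trans (Nat.le_ceil _) (by exact_mod_cast hm)) (hTm m)
        have e2 : max 0 (min t (T m)) = t := by rw [min_eq_left htT, max_eq_right ht]
        have hfb : dist (f m t) (b m) = T m - t := by
          have := hσiso m t (T m) ⟨ht, htT⟩ ⟨hT0 m, le_refl _⟩
          rw [hfdef]; simp only [e2]
          rw [hσT m] at this
          rw [this, abs_of_nonpos (by linarith)]; ring
        have hcb : Metric.infDist (b m) A ≤ dist c (b m) := by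
          simpa [dist_comm] using Metric.infDist_le_dist_of_mem (x := b m) hc
        have htri : dist c (b m) ≤ dist c (f m t) + dist (f m t) (b m) := dist_triangle _ _ _
        have := hTub m
        rw [hfb] at htri
        linarith
      linarith
    · linarith
  refine ⟨γ, hray, hγ0, hbuse, ?_⟩
  intro s hs
  rw [Set.disjoint_left]
  intro c hcs hcA
  exact absurd ((hbuse c hcA).trans_lt (lt_of_lt_of_le hs hcs)) (lt_irrefl _)
end
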